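/- arXiv:1609.05832 — 2 statements merged into one kernel-verified Lean document; each statement's English description precedes it below -/
import Mathlib

section
/- sup_{μ∈M_V(μ₁,μ₂)} E^μ[V] = sup_{μ∈M(μ₁,μ₂)} E^{μ₁}[√(Λ_μ(S₁))]; that is, the dual superreplication value for the VIX future is attained over models of local volatility type in which V = √(Λ_μ(S₁)). -/
open MeasureTheory Set Filter

noncomputable section

/-- The log-contract payoff `L(x) = -(2/τ) ln x`. -/
def Lf (τ x : ℝ) : ℝ := -(2 / τ) * Real.log x

/-- `μ` is a market smile: a probability measure concentrated on `(0,∞)`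
with mean `S₀` and integrable logarithm. -/
structure IsMarginal (S₀ : ℝ) (μ : Measure ℝ) : Prop where
  prob : IsProbabilityMeasure μ
  conc : μ (Set.Ioi (0 : ℝ))ᶜ = 0
  int_id : Integrable (fun s => s) μ
  mean : (∫ s, s ∂μ) = S₀
  int_log : Integrable (fun s => |Real.log s|) μ

/-- `μ ∈ M(μ₁,μ₂)`: a martingale coupling of `μ₁` and `μ₂`. -/
structure MemM (μ₁ μ₂ : Measure ℝ) (μ : Measure (ℝ × ℝ)) : Prop where
  prob : IsProbabilityMeasure μ
  fst : μ.map Prod.fst = μ₁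
  snd : μ.map Prod.snd = μ₂
  mart : ∀ h : ℝ → ℝ, Measurable h → (∀ x, |h x| ≤ 1) →
    ∫ p : ℝ × ℝ, h p.1 * (p.2 - p.1) ∂μ = 0

/-- `μ ∈ M_V(μ₁,μ₂)`: a joint model for `(S₁,S₂,V)` consistent with the smiles. -/
structure MemMV (τ : ℝ) (μ₁ μ₂ : Measure ℝ) (μ : Measure (ℝ × ℝ × ℝ)) : Prop where
  prob : IsProbabilityMeasure μ
  fst : μ.map (fun p => p.1) = μ₁
  snd : μ.map (fun p => p.2.1) = μ₂
  vnonneg : μ {p : ℝ × ℝ × ℝ | p.2.2 < 0} = 0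
  int_v2 : Integrable (fun p : ℝ × ℝ × ℝ => p.2.2 ^ 2) μ
  mart : ∀ h : ℝ → ℝ → ℝ, Measurable (Function.uncurry h) → (∀ x v, |h x v| ≤ 1) →
    ∫ p : ℝ × ℝ × ℝ, h p.1 p.2.2 * (p.2.1 - p.1) ∂μ = 0
  vix : ∀ h : ℝ → ℝ → ℝ, Measurable (Function.uncurry h) → (∀ x v, |h x v| ≤ 1) →
    ∫ p : ℝ × ℝ × ℝ, h p.1 p.2.2 * (Lf τ (p.2.1 / p.1) - p.2.2 ^ 2) ∂μ = 0

/-- `Λ` is (a version of) `Λ_μ`, i.e. `Λ(S₁) = E^μ[L(S₂/S₁) | S₁]`. -/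
def IsCondLambda (τ : ℝ) (μ : Measure (ℝ × ℝ)) (Λ : ℝ → ℝ) : Prop :=
  Measurable Λ ∧ Integrable (fun p : ℝ × ℝ => Λ p.1) μ ∧
    ∀ h : ℝ → ℝ, Measurable h → (∀ x, |h x| ≤ 1) →
      ∫ p : ℝ × ℝ, h p.1 * Lf τ (p.2 / p.1) ∂μ = ∫ p : ℝ × ℝ, h p.1 * Λ p.1 ∂μ

/-! For `μ ∈ M_V`, let `Λ` be the conditional expectation of `L(S₂/S₁)` given `S₁` under the
`(S₁,S₂)`-marginal of `μ`, which lies in `M`. The AM–GM bound `V ≤ V²/(2b) + b/2` with the weight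
`b = √Λ(S₁) + ε`, a function of `S₁`, turns `E[V²/2b]` into `E[Λ(S₁)/2b]` and gives
`E[V] ≤ E[√Λ(S₁)] + ε`. Conversely, for `μ ∈ M` the law of `(S₁, S₂, √Λ_μ(S₁))` lies in `M_V` and
has value `E[√Λ_μ(S₁)]`. This needs `Λ_μ ≥ 0`, i.e. the conditional Jensen inequality
`E[log(S₂/S₁); S₁ ∈ s] ≤ 0`, which follows from the tangent bound `log r ≤ r - 1` and the
martingale property. -/

open scoped Topology

lemma le_sq_div_add_div {b : ℝ} (hb : 0 < b) (v : ℝ) : v ≤ v ^ 2 / (2 * b) + b / 2 := by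
  rw [div_add_div _ _ (by positivity) two_ne_zero, le_div_iff₀ (by positivity)]
  nlinarith [sq_nonneg (v - b)]

lemma div_sqrt_add_le {ε : ℝ} (hε : 0 < ε) (t : ℝ) : t / (2 * (√t + ε)) ≤ √t / 2 := by
  rcases le_or_gt t 0 with ht | ht
  · exact (div_nonpos_of_nonpos_of_nonneg ht (by positivity)).trans (by positivity)
  · rw [div_le_div_iff₀ (by positivity) two_pos]
    nlinarith [Real.sq_sqrt ht.le, Real.sqrt_nonneg t]

lemma sqrt_le_abs_add_one_div_two (t : ℝ) : √t ≤ (|t| + 1) / 2 := by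
  rcases le_or_gt t 0 with ht | ht
  · rw [Real.sqrt_eq_zero_of_nonpos ht]; positivity
  · nlinarith [Real.sq_sqrt ht.le, sq_nonneg (√t - 1), le_abs_self t]

section CondSecondMoment

variable {Ω : Type*} [MeasurableSpace Ω] {μ : Measure Ω} [IsFiniteMeasure μ] {X V : Ω → ℝ}
  {Λ : ℝ → ℝ}

lemma integrable_sqrt_comp (hX : Measurable X) (hΛ : Measurable Λ)
    (hΛX : Integrable (fun ω => Λ (X ω)) μ) : Integrable (fun ω => √(Λ (X ω))) μ := by
  refine ((hΛX.abs.add (integrable_const 1)).div_const 2).mono'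
    (hΛ.comp hX).sqrt.aestronglyMeasurable (.of_forall fun ω => ?_)
  rw [Real.norm_of_nonneg (Real.sqrt_nonneg _)]
  exact sqrt_le_abs_add_one_div_two _

lemma integral_le_integral_sqrt_add_of_condSq (hX : Measurable X)
    (hV : AEStronglyMeasurable V μ) (hV2 : Integrable (fun ω => V ω ^ 2) μ) (hΛ : Measurable Λ)
    (hΛX : Integrable (fun ω => Λ (X ω)) μ)
    (hcond : ∀ h : ℝ → ℝ, Measurable h → (∀ x, |h x| ≤ 1) →
      ∫ ω, h (X ω) * V ω ^ 2 ∂μ = ∫ ω, h (X ω) * Λ (X ω) ∂μ)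
    {ε : ℝ} (hε : 0 < ε) :
    ∫ ω, V ω ∂μ ≤ ∫ ω, √(Λ (X ω)) ∂μ + ε / 2 * μ.real univ := by
  set b : ℝ → ℝ := fun x => √(Λ x) + ε
  have hb_pos : ∀ x, 0 < b x := fun x => by positivity
  have hbm : Measurable b := hΛ.sqrt.add_const ε
  have hw_bdd : ∀ x, |ε / b x| ≤ 1 := fun x => by
    rw [abs_of_pos (div_pos hε (hb_pos x)), div_le_one (hb_pos x)]
    exact le_add_of_nonneg_left (Real.sqrt_nonneg _)
  have hwX : AEStronglyMeasurable (fun ω => ε / b (X ω)) μ :=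
    ((measurable_const.div hbm).comp hX).aestronglyMeasurable
  have hsqrt := integrable_sqrt_comp hX hΛ hΛX
  have hV2w : Integrable (fun ω => ε / b (X ω) * V ω ^ 2) μ :=
    hV2.bdd_mul hwX (.of_forall fun ω => hw_bdd (X ω))
  have hΛw : Integrable (fun ω => ε / b (X ω) * Λ (X ω)) μ :=
    hΛX.bdd_mul hwX (.of_forall fun ω => hw_bdd (X ω))
  have hb2 : Integrable (fun ω => b (X ω) / 2) μ :=
    (hsqrt.add (integrable_const ε)).div_const 2
  have hVint : Integrable V μ := ((memLp_two_iff_integrable_sq hV).mpr hV2).integrable one_le_two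
  calc ∫ ω, V ω ∂μ
      ≤ ∫ ω, ((2 * ε)⁻¹ * (ε / b (X ω) * V ω ^ 2) + b (X ω) / 2) ∂μ := by
        refine integral_mono hVint ((hV2w.const_mul _).add hb2) fun ω => ?_
        have hbX := (hb_pos (X ω)).ne'
        have : (2 * ε)⁻¹ * (ε / b (X ω) * V ω ^ 2) = V ω ^ 2 / (2 * b (X ω)) := by field_simp
        linarith [le_sq_div_add_div (hb_pos (X ω)) (V ω)]
    _ = ∫ ω, ((2 * ε)⁻¹ * (ε / b (X ω) * Λ (X ω)) + b (X ω) / 2) ∂μ := by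
        rw [integral_add (hV2w.const_mul _) hb2, integral_add (hΛw.const_mul _) hb2,
          integral_const_mul, integral_const_mul,
          hcond (fun x => ε / b x) (measurable_const.div hbm) hw_bdd]
    _ ≤ ∫ ω, (√(Λ (X ω)) + ε / 2) ∂μ := by
        refine integral_mono ((hΛw.const_mul _).add hb2) (hsqrt.add (integrable_const _))
          fun ω => ?_
        have := div_sqrt_add_le hε (Λ (X ω))
        have hbX := (hb_pos (X ω)).ne'
        have : (2 * ε)⁻¹ * (ε / b (X ω) * Λ (X ω)) = Λ (X ω) / (2 * b (X ω)) := by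
          field_simp
        simp only [b] at *
        linarith
    _ = ∫ ω, √(Λ (X ω)) ∂μ + ε / 2 * μ.real univ := by
        rw [integral_add hsqrt (integrable_const _), integral_const, smul_eq_mul, mul_comm]

/-- `E[V] ≤ E[√Λ(X)]` whenever `Λ(X)` is a version of `E[V² | X]`. -/
theorem integral_le_integral_sqrt_of_condSq (hX : Measurable X)
    (hV : AEStronglyMeasurable V μ) (hV2 : Integrable (fun ω => V ω ^ 2) μ) (hΛ : Measurable Λ)
    (hΛX : Integrable (fun ω => Λ (X ω)) μ)
    (hcond : ∀ h : ℝ → ℝ, Measurable h → (∀ x, |h x| ≤ 1) →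
      ∫ ω, h (X ω) * V ω ^ 2 ∂μ = ∫ ω, h (X ω) * Λ (X ω) ∂μ) :
    ∫ ω, V ω ∂μ ≤ ∫ ω, √(Λ (X ω)) ∂μ := by
  have hlim : Tendsto (fun ε : ℝ => ∫ ω, √(Λ (X ω)) ∂μ + ε / 2 * μ.real univ) (𝓝[>] 0)
      (𝓝 (∫ ω, √(Λ (X ω)) ∂μ)) := by
    refine tendsto_nhdsWithin_of_tendsto_nhds ?_
    convert (Continuous.tendsto (by fun_prop) 0 :
      Tendsto (fun ε : ℝ => ∫ ω, √(Λ (X ω)) ∂μ + ε / 2 * μ.real univ) _ _) using 2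
    simp
  exact ge_of_tendsto hlim (eventually_nhdsWithin_of_forall fun ε hε =>
    integral_le_integral_sqrt_add_of_condSq hX hV hV2 hΛ hΛX hcond hε)

end CondSecondMoment

section LogJensen

variable {ν : Measure (ℝ × ℝ)}

/-- Tangent line `log r ≤ r - 1`; the test function `1/S₁` of the martingale property
is bounded only away from `S₁ = 0`. -/
lemma setIntegral_log_div_nonpos_of_subset_Ici (hpos : ∀ᵐ p ∂ν, 0 < p.2)
    (hlog : Integrable (fun p : ℝ × ℝ => Real.log (p.2 / p.1)) ν)
    (hint : Integrable (fun p : ℝ × ℝ => p.2 - p.1) ν)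
    (hmart : ∀ h : ℝ → ℝ, Measurable h → (∀ x, |h x| ≤ 1) →
      ∫ p : ℝ × ℝ, h p.1 * (p.2 - p.1) ∂ν = 0)
    {ε : ℝ} (hε : 0 < ε) {t : Set ℝ} (ht : MeasurableSet t) (htε : t ⊆ Ici ε) :
    ∫ p in Prod.fst ⁻¹' t, Real.log (p.2 / p.1) ∂ν ≤ 0 := by
  set w : ℝ → ℝ := t.indicator fun x => ε / x
  have hw_bdd : ∀ x, |w x| ≤ 1 := fun x => by
    by_cases hx : x ∈ t
    · have hεx : ε ≤ x := htε hx
      simp only [w, indicator_of_mem hx]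
      rw [abs_of_pos (div_pos hε (hε.trans_le hεx)), div_le_one (hε.trans_le hεx)]
      exact hεx
    · simp [w, indicator_of_notMem hx]
  have hw : Measurable w := (measurable_const.div measurable_id).indicator ht
  have hwint : Integrable (fun p : ℝ × ℝ => w p.1 * (p.2 - p.1)) ν :=
    hint.bdd_mul (hw.comp measurable_fst).aestronglyMeasurable (.of_forall fun p => hw_bdd p.1)
  have htan : ∀ᵐ p ∂ν, (Prod.fst ⁻¹' t).indicator (fun p => Real.log (p.2 / p.1)) p
      ≤ ε⁻¹ * (w p.1 * (p.2 - p.1)) := by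
    filter_upwards [hpos] with p hp
    by_cases hp1 : p.1 ∈ t
    · have hx : 0 < p.1 := hε.trans_le (htε hp1)
      simp only [w, indicator_of_mem (show p ∈ Prod.fst ⁻¹' t from hp1), indicator_of_mem hp1]
      have : ε⁻¹ * (ε / p.1 * (p.2 - p.1)) = p.2 / p.1 - 1 := by field_simp
      rw [this]
      exact Real.log_le_sub_one_of_pos (div_pos hp hx)
    · simp [w, indicator_of_notMem (show p ∉ Prod.fst ⁻¹' t from hp1), indicator_of_notMem hp1]
  calc ∫ p in Prod.fst ⁻¹' t, Real.log (p.2 / p.1) ∂ν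
      = ∫ p, (Prod.fst ⁻¹' t).indicator (fun p => Real.log (p.2 / p.1)) p ∂ν :=
        (integral_indicator (measurable_fst ht)).symm
    _ ≤ ∫ p, ε⁻¹ * (w p.1 * (p.2 - p.1)) ∂ν :=
        integral_mono_ae (hlog.indicator (measurable_fst ht)) (hwint.const_mul _) htan
    _ = 0 := by rw [integral_const_mul, hmart w hw hw_bdd, mul_zero]

lemma setIntegral_log_div_nonpos (hpos : ∀ᵐ p ∂ν, 0 < p.1 ∧ 0 < p.2)
    (hlog : Integrable (fun p : ℝ × ℝ => Real.log (p.2 / p.1)) ν)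
    (hint : Integrable (fun p : ℝ × ℝ => p.2 - p.1) ν)
    (hmart : ∀ h : ℝ → ℝ, Measurable h → (∀ x, |h x| ≤ 1) →
      ∫ p : ℝ × ℝ, h p.1 * (p.2 - p.1) ∂ν = 0)
    {s : Set ℝ} (hs : MeasurableSet s) :
    ∫ p in Prod.fst ⁻¹' s, Real.log (p.2 / p.1) ∂ν ≤ 0 := by
  set t : ℕ → Set ℝ := fun n => s ∩ Ici (1 / (n + 1))
  have ht : ∀ n, MeasurableSet (Prod.fst ⁻¹' t n : Set (ℝ × ℝ)) := fun n =>
    measurable_fst (hs.inter measurableSet_Ici)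
  have hmono : Monotone fun n => (Prod.fst ⁻¹' t n : Set (ℝ × ℝ)) := fun m n hmn =>
    preimage_mono (inter_subset_inter_right s (Ici_subset_Ici.mpr
      (one_div_le_one_div_of_le (by positivity) (by exact_mod_cast Nat.add_le_add_right hmn 1))))
  have hunion : (⋃ n, Prod.fst ⁻¹' t n : Set (ℝ × ℝ)) =ᵐ[ν] Prod.fst ⁻¹' s := by
    filter_upwards [hpos] with p hp
    refine propext (?_ : p ∈ ⋃ n, Prod.fst ⁻¹' t n ↔ p ∈ Prod.fst ⁻¹' s)
    simp only [mem_iUnion, mem_preimage, t, mem_inter_iff, mem_Ici]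
    refine ⟨fun ⟨_, hn, _⟩ => hn, fun hps => ?_⟩
    obtain ⟨n, hn⟩ := exists_nat_one_div_lt hp.1
    exact ⟨n, hps, hn.le⟩
  have hlim := tendsto_setIntegral_of_monotone ht hmono hlog.integrableOn
  rw [setIntegral_congr_set hunion] at hlim
  exact le_of_tendsto' hlim fun n => setIntegral_log_div_nonpos_of_subset_Ici
    (hpos.mono fun p hp => hp.2) hlog hint hmart Nat.one_div_pos_of_nat
    (hs.inter measurableSet_Ici) inter_subset_right

end LogJensen

section Smiles

variable {τ S₀ : ℝ} {μ₁ μ₂ : Measure ℝ} {ν : Measure (ℝ × ℝ)}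

lemma IsMarginal.ae_pos (h : IsMarginal S₀ μ₁) : ∀ᵐ x ∂μ₁, 0 < x :=
  mem_ae_iff.mpr h.conc

lemma IsMarginal.integrable_log (h : IsMarginal S₀ μ₁) : Integrable Real.log μ₁ :=
  (integrable_norm_iff Real.measurable_log.aestronglyMeasurable).mp h.int_log

lemma MemM.ae_pos (h₁ : IsMarginal S₀ μ₁) (h₂ : IsMarginal S₀ μ₂) (hν : MemM μ₁ μ₂ ν) :
    ∀ᵐ p ∂ν, 0 < p.1 ∧ 0 < p.2 := by
  rw [← hν.fst] at h₁
  rw [← hν.snd] at h₂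
  filter_upwards [ae_of_ae_map measurable_fst.aemeasurable h₁.ae_pos,
    ae_of_ae_map measurable_snd.aemeasurable h₂.ae_pos] with p hp₁ hp₂
  exact ⟨hp₁, hp₂⟩

lemma MemM.integrable_sub (h₁ : IsMarginal S₀ μ₁) (h₂ : IsMarginal S₀ μ₂) (hν : MemM μ₁ μ₂ ν) :
    Integrable (fun p : ℝ × ℝ => p.2 - p.1) ν := by
  rw [← hν.fst] at h₁
  rw [← hν.snd] at h₂
  exact (h₂.int_id.comp_measurable measurable_snd).sub (h₁.int_id.comp_measurable measurable_fst)

lemma MemM.integrable_log_div (h₁ : IsMarginal S₀ μ₁) (h₂ : IsMarginal S₀ μ₂)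
    (hν : MemM μ₁ μ₂ ν) : Integrable (fun p : ℝ × ℝ => Real.log (p.2 / p.1)) ν := by
  have hlog₁ : Integrable Real.log (ν.map Prod.fst) := hν.fst ▸ h₁.integrable_log
  have hlog₂ : Integrable Real.log (ν.map Prod.snd) := hν.snd ▸ h₂.integrable_log
  have hlog := (hlog₂.comp_measurable measurable_snd).sub (hlog₁.comp_measurable measurable_fst)
  refine hlog.congr ?_
  filter_upwards [hν.ae_pos h₁ h₂] with p hp
  exact (Real.log_div hp.2.ne' hp.1.ne').symm

lemma MemM.integrable_lf (h₁ : IsMarginal S₀ μ₁) (h₂ : IsMarginal S₀ μ₂) (hν : MemM μ₁ μ₂ ν) :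
    Integrable (fun p : ℝ × ℝ => Lf τ (p.2 / p.1)) ν :=
  (hν.integrable_log_div h₁ h₂).const_mul _

lemma IsCondLambda.setIntegral_eq {Λ : ℝ → ℝ} (hΛ : IsCondLambda τ ν Λ) {s : Set ℝ}
    (hs : MeasurableSet s) :
    ∫ p in Prod.fst ⁻¹' s, Lf τ (p.2 / p.1) ∂ν = ∫ p in Prod.fst ⁻¹' s, Λ p.1 ∂ν := by
  have hind : ∀ f : ℝ × ℝ → ℝ, ∫ p in Prod.fst ⁻¹' s, f p ∂ν
      = ∫ p, s.indicator 1 p.1 * f p ∂ν := fun f => by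
    rw [← integral_indicator (measurable_fst hs)]
    congr 1 with p
    by_cases hp : p.1 ∈ s <;> simp [hp]
  rw [hind, hind]
  refine hΛ.2.2 _ (measurable_const.indicator hs) fun x => ?_
  by_cases hx : x ∈ s <;> simp [hx]

lemma IsCondLambda.ae_nonneg (hτ : 0 < τ) (h₁ : IsMarginal S₀ μ₁) (h₂ : IsMarginal S₀ μ₂)
    (hν : MemM μ₁ μ₂ ν) {Λ : ℝ → ℝ} (hΛ : IsCondLambda τ ν Λ) : ∀ᵐ x ∂μ₁, 0 ≤ Λ x := by
  have hΛm := hΛ.1.aestronglyMeasurable (μ := ν.map Prod.fst)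
  have hΛint : Integrable Λ (ν.map Prod.fst) :=
    (integrable_map_measure hΛm measurable_fst.aemeasurable).mpr hΛ.2.1
  rw [← hν.fst]
  refine ae_nonneg_of_forall_setIntegral_nonneg hΛint fun s hs _ => ?_
  rw [setIntegral_map hs hΛm measurable_fst.aemeasurable, ← hΛ.setIntegral_eq hs]
  simp only [Lf]
  rw [integral_const_mul]
  exact mul_nonneg_of_nonpos_of_nonpos (by rw [neg_nonpos]; positivity) <| setIntegral_log_div_nonpos
    (hν.ae_pos h₁ h₂) (hν.integrable_log_div h₁ h₂) (hν.integrable_sub h₁ h₂) hν.mart hs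

end Smiles

section Models

variable {τ S₀ : ℝ} {μ₁ μ₂ : Measure ℝ}

@[fun_prop]
lemma measurable_Lf (τ : ℝ) : Measurable (Lf τ) :=
  measurable_const.mul Real.measurable_log

lemma MemMV.memM_map {μ : Measure (ℝ × ℝ × ℝ)} (hμ : MemMV τ μ₁ μ₂ μ) :
    MemM μ₁ μ₂ (μ.map fun q => (q.1, q.2.1)) := by
  have hg : Measurable fun q : ℝ × ℝ × ℝ => (q.1, q.2.1) := by fun_prop
  have := hμ.prob
  refine ⟨Measure.isProbabilityMeasure_map hg.aemeasurable, ?_, ?_, fun h hh hb => ?_⟩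
  · rw [Measure.map_map measurable_fst hg]; exact hμ.fst
  · rw [Measure.map_map measurable_snd hg]; exact hμ.snd
  · rw [integral_map hg.aemeasurable (by fun_prop)]
    exact hμ.mart (fun x _ => h x) (hh.comp measurable_fst) fun x _ => hb x

lemma isCondLambda_integral_condKernel {ν : Measure (ℝ × ℝ)} [IsFiniteMeasure ν]
    (hL : Integrable (fun p : ℝ × ℝ => Lf τ (p.2 / p.1)) ν) :
    IsCondLambda τ ν fun x => ∫ y, Lf τ (y / x) ∂ν.condKernel x := by
  set Λ : ℝ → ℝ := fun x => ∫ y, Lf τ (y / x) ∂ν.condKernel x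
  have hΛm : Measurable Λ :=
    (Measurable.stronglyMeasurable (by fun_prop : Measurable fun p : ℝ × ℝ => Lf τ (p.2 / p.1)))
      |>.integral_kernel_prod_right' (κ := ν.condKernel) |>.measurable
  refine ⟨hΛm, hL.integral_condKernel.comp_measurable measurable_fst, fun h hh hb => ?_⟩
  have hhL : Integrable (fun p : ℝ × ℝ => h p.1 * Lf τ (p.2 / p.1)) ν :=
    hL.bdd_mul (hh.comp measurable_fst).aestronglyMeasurable (.of_forall fun p => hb p.1)
  rw [← Measure.integral_condKernel hhL, Measure.fst, ← integral_map measurable_fst.aemeasurable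
    (hh.fun_mul hΛm).aestronglyMeasurable]
  simp_rw [integral_const_mul, Λ]

lemma MemMV.integral_le_integral_sqrt (h₁ : IsMarginal S₀ μ₁) (h₂ : IsMarginal S₀ μ₂)
    {μ : Measure (ℝ × ℝ × ℝ)} (hμ : MemMV τ μ₁ μ₂ μ) {Λ : ℝ → ℝ}
    (hΛ : IsCondLambda τ (μ.map fun q => (q.1, q.2.1)) Λ) :
    ∫ q, q.2.2 ∂μ ≤ ∫ x, √(Λ x) ∂μ₁ := by
  have := hμ.prob
  have hg : Measurable fun q : ℝ × ℝ × ℝ => (q.1, q.2.1) := by fun_prop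
  have hL : Integrable (fun q : ℝ × ℝ × ℝ => Lf τ (q.2.1 / q.1)) μ :=
    (hμ.memM_map.integrable_lf h₁ h₂).comp_measurable hg
  have hΛX : Integrable (fun q : ℝ × ℝ × ℝ => Λ q.1) μ := hΛ.2.1.comp_measurable hg
  rw [← hμ.fst, integral_map measurable_fst.aemeasurable
    (hΛ.1.sqrt.aestronglyMeasurable)]
  refine integral_le_integral_sqrt_of_condSq measurable_fst (by fun_prop) hμ.int_v2 hΛ.1 hΛX
    fun h hh hb => ?_
  have hhX : AEStronglyMeasurable (fun q : ℝ × ℝ × ℝ => h q.1) μ :=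
    (hh.comp measurable_fst).aestronglyMeasurable
  have hhL : Integrable (fun q : ℝ × ℝ × ℝ => h q.1 * Lf τ (q.2.1 / q.1)) μ :=
    hL.bdd_mul hhX (.of_forall fun q => hb q.1)
  have hhV : Integrable (fun q : ℝ × ℝ × ℝ => h q.1 * q.2.2 ^ 2) μ :=
    hμ.int_v2.bdd_mul hhX (.of_forall fun q => hb q.1)
  have hvix := hμ.vix (fun x _ => h x) (hh.comp measurable_fst) fun x _ => hb x
  simp only [mul_sub] at hvix
  rw [integral_sub hhL hhV, sub_eq_zero] at hvix
  have hcond := hΛ.2.2 h hh hb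
  have hΛm := hΛ.1
  rw [integral_map hg.aemeasurable (by fun_prop : Measurable fun p : ℝ × ℝ =>
      h p.1 * Lf τ (p.2 / p.1)).aestronglyMeasurable,
    integral_map hg.aemeasurable (by fun_prop : Measurable fun p : ℝ × ℝ =>
      h p.1 * Λ p.1).aestronglyMeasurable] at hcond
  exact hvix.symm.trans hcond

lemma MemM.memMV_map_sqrt (hτ : 0 < τ) (h₁ : IsMarginal S₀ μ₁) (h₂ : IsMarginal S₀ μ₂)
    {ν : Measure (ℝ × ℝ)} (hν : MemM μ₁ μ₂ ν) {Λ : ℝ → ℝ} (hΛ : IsCondLambda τ ν Λ) :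
    MemMV τ μ₁ μ₂ (ν.map fun p => (p.1, p.2, √(Λ p.1))) := by
  have := hν.prob
  have hΛm := hΛ.1
  have hT : Measurable fun p : ℝ × ℝ => (p.1, p.2, √(Λ p.1)) := by fun_prop
  have hΛ_nonneg : ∀ᵐ p ∂ν, 0 ≤ Λ p.1 := by
    have := hΛ.ae_nonneg hτ h₁ h₂ hν
    rw [← hν.fst] at this
    exact ae_of_ae_map measurable_fst.aemeasurable this
  refine ⟨Measure.isProbabilityMeasure_map hT.aemeasurable, ?_, ?_, ?_, ?_, fun h hh hb => ?_,
    fun h hh hb => ?_⟩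
  · rw [Measure.map_map measurable_fst hT]; exact hν.fst
  · rw [Measure.map_map (by fun_prop) hT]; exact hν.snd
  · rw [Measure.map_apply hT (measurableSet_lt (by fun_prop) measurable_const)]
    simp [(Real.sqrt_nonneg _).not_gt]
  · refine (integrable_map_measure (by fun_prop) hT.aemeasurable).mpr (hΛ.2.1.congr ?_)
    filter_upwards [hΛ_nonneg] with p hp
    simp [Real.sq_sqrt hp]
  · have hhq : Measurable fun q : ℝ × ℝ × ℝ => h q.1 q.2.2 :=
      hh.comp (by fun_prop : Measurable fun q : ℝ × ℝ × ℝ => (q.1, q.2.2))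
    rw [integral_map hT.aemeasurable (by fun_prop)]
    exact hν.mart _ (hh.comp (measurable_id.prodMk hΛm.sqrt)) fun x => hb x _
  · have hH : Measurable fun x => h x √(Λ x) := hh.comp (measurable_id.prodMk hΛm.sqrt)
    have hHb : ∀ p : ℝ × ℝ, ‖h p.1 √(Λ p.1)‖ ≤ 1 := fun p => hb p.1 _
    have hhq : Measurable fun q : ℝ × ℝ × ℝ => h q.1 q.2.2 :=
      hh.comp (by fun_prop : Measurable fun q : ℝ × ℝ × ℝ => (q.1, q.2.2))
    have hsq : (fun p : ℝ × ℝ => h p.1 √(Λ p.1) * (Lf τ (p.2 / p.1) - √(Λ p.1) ^ 2))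
        =ᵐ[ν] fun p => h p.1 √(Λ p.1) * Lf τ (p.2 / p.1) - h p.1 √(Λ p.1) * Λ p.1 := by
      filter_upwards [hΛ_nonneg] with p hp
      rw [Real.sq_sqrt hp, mul_sub]
    have hHX : AEStronglyMeasurable (fun p : ℝ × ℝ => h p.1 √(Λ p.1)) ν :=
      (hH.comp measurable_fst).aestronglyMeasurable
    have hHL : Integrable (fun p : ℝ × ℝ => h p.1 √(Λ p.1) * Lf τ (p.2 / p.1)) ν :=
      (hν.integrable_lf h₁ h₂).bdd_mul hHX (.of_forall hHb)
    have hHΛ : Integrable (fun p : ℝ × ℝ => h p.1 √(Λ p.1) * Λ p.1) ν :=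
      hΛ.2.1.bdd_mul hHX (.of_forall hHb)
    rw [integral_map hT.aemeasurable (by fun_prop), integral_congr_ae hsq,
      integral_sub hHL hHΛ, hΛ.2.2 _ hH fun x => hb x _, sub_self]

lemma MemM.integral_map_sqrt {ν : Measure (ℝ × ℝ)} (hν : MemM μ₁ μ₂ ν) {Λ : ℝ → ℝ}
    (hΛ : Measurable Λ) :
    ∫ q, q.2.2 ∂(ν.map fun p => (p.1, p.2, √(Λ p.1))) = ∫ x, √(Λ x) ∂μ₁ := by
  rw [← hν.fst, integral_map (by fun_prop) (by fun_prop),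
    integral_map (by fun_prop) hΛ.sqrt.aestronglyMeasurable]

end Models

theorem local_vol_superreplication_general (τ S₀ : ℝ) (hτ : 0 < τ)
    (μ₁ μ₂ : Measure ℝ) (h₁ : IsMarginal S₀ μ₁) (h₂ : IsMarginal S₀ μ₂) :
    sSup {y : EReal | ∃ μ : Measure (ℝ × ℝ × ℝ), MemMV τ μ₁ μ₂ μ ∧
        y = ((∫ p, p.2.2 ∂μ : ℝ) : EReal)}
      = sSup {y : EReal | ∃ (μ : Measure (ℝ × ℝ)) (Λ : ℝ → ℝ), MemM μ₁ μ₂ μ ∧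
          IsCondLambda τ μ Λ ∧ y = ((∫ s, Real.sqrt (Λ s) ∂μ₁ : ℝ) : EReal)} := by
  apply le_antisymm
  · refine sSup_le ?_
    rintro _ ⟨μ, hμ, rfl⟩
    have := hμ.memM_map.prob
    have hΛ := isCondLambda_integral_condKernel (hμ.memM_map.integrable_lf h₁ h₂ (τ := τ))
    exact le_sSup_of_le ⟨_, _, hμ.memM_map, hΛ, rfl⟩
      (EReal.coe_le_coe_iff.mpr (hμ.integral_le_integral_sqrt h₁ h₂ hΛ))
  · refine sSup_le ?_
    rintro _ ⟨ν, Λ, hν, hΛ, rfl⟩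
    exact le_sSup ⟨_, hν.memMV_map_sqrt hτ h₁ h₂ hΛ, by rw [hν.integral_map_sqrt hΛ.1]⟩

/-- Local volatility property of the superreplication price: the dual value
`sup_{μ ∈ M_V} E^μ[V]` is attained over models of local volatility type, i.e.
`sup_{μ ∈ M_V} E^μ[V] = sup_{μ ∈ M} E^{μ₁}[√(Λ_μ(S₁))]`. -/
theorem local_vol_superreplication (τ S₀ : ℝ) (hτ : 0 < τ) (hS₀ : 0 < S₀)
    (μ₁ μ₂ : Measure ℝ) (h₁ : IsMarginal S₀ μ₁) (h₂ : IsMarginal S₀ μ₂) :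
    sSup {y : EReal | ∃ μ : Measure (ℝ × ℝ × ℝ), MemMV τ μ₁ μ₂ μ ∧
        y = ((∫ p, p.2.2 ∂μ : ℝ) : EReal)}
      = sSup {y : EReal | ∃ (μ : Measure (ℝ × ℝ)) (Λ : ℝ → ℝ), MemM μ₁ μ₂ μ ∧
          IsCondLambda τ μ Λ ∧ y = ((∫ s, Real.sqrt (Λ s) ∂μ₁ : ℝ) : EReal)} :=
  local_vol_superreplication_general τ S₀ hτ μ₁ μ₂ h₁ h₂
end
end

section
/- Let φ:(0,∞)×ℝ→ℝ be concave, and define u₁(s₁) = inf_{v≥0}{v − φ(s₁, L(s₁)+v²)}, u₂(s₂) = φ(s₂, L(s₂)), Δ^S(s₁,v) = −∂₁,ᵣφ(s₁, L(s₁)+v²), Δ^L(s₁,v) = −∂₂,ᵣφ(s₁, L(s₁)+v²), where ∂ᵢ,ᵣφ denotes the right partial derivative in the i-th argument. Then for all s₁,s₂>0 and v≥0: u₁(s₁)+u₂(s₂)+Δ^S(s₁,v)(s₂−s₁)+Δ^L(s₁,v)(L(s₂/s₁)−v²) ≤ v. -/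
/-! Taking `w = v` in the infimum, and using `L (s₂ / s₁) = L s₂ - L s₁`, the claim reduces to the
supergradient-type inequality
`φ (s₂, L s₂) ≤ φ p + ∂₁,ᵣφ p * (s₂ - s₁) + ∂₂,ᵣφ p * (L s₂ - L s₁ - v²)` at `p = (s₁, L s₁ + v²)`.
For a concave function this holds towards every point that is not strictly above `p` in both
coordinates: when `y₁ ≤ y₀`, the point `(x₀ + μ (x₁ - x₀), y₀)` is a convex combination of
`(x₁, y₁)` and `(x₀, t)` for `t > y₀`, and letting `t ↓ y₀` turns the chord slope in the second
variable into `∂₂,ᵣφ`. Since `L` is decreasing, `s₂ > s₁` forces `L s₂ < L s₁ + v²`. -/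

open MeasureTheory Set Filter

noncomputable section

open scoped Topology

namespace ConcaveOn

section OneVariable

variable {S : Set ℝ} {f : ℝ → ℝ} {x y : ℝ}

lemma differentiableWithinAt_Ioi_of_mem_interior (hf : ConcaveOn ℝ S f) (hx : x ∈ interior S) :
    DifferentiableWithinAt ℝ f (Ioi x) x := by
  simpa using (hf.neg.differentiableWithinAt_Ioi_of_mem_interior hx).neg

lemma differentiableWithinAt_Iio_of_mem_interior (hf : ConcaveOn ℝ S f) (hx : x ∈ interior S) :
    DifferentiableWithinAt ℝ f (Iio x) x := by
  simpa using (hf.neg.differentiableWithinAt_Iio_of_mem_interior hx).neg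

lemma rightDeriv_le_leftDeriv_of_mem_interior (hf : ConcaveOn ℝ S f) (hx : x ∈ interior S) :
    derivWithin f (Ioi x) x ≤ derivWithin f (Iio x) x := by
  simpa [derivWithin.neg] using hf.neg.leftDeriv_le_rightDeriv_of_mem_interior hx

lemma le_add_rightDeriv_mul_sub (hf : ConcaveOn ℝ S f) (hx : x ∈ interior S) (hy : y ∈ S) :
    f y ≤ f x + derivWithin f (Ioi x) x * (y - x) := by
  rcases lt_trichotomy y x with hyx | rfl | hxy
  · have hslope : derivWithin f (Ioi x) x ≤ slope f y x :=
      (hf.rightDeriv_le_leftDeriv_of_mem_interior hx).trans <| hf.leftDeriv_le_slope hy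
        (interior_subset hx) hyx (hf.differentiableWithinAt_Iio_of_mem_interior hx)
    rw [slope_def_field, le_div_iff₀ (sub_pos.2 hyx)] at hslope
    linarith
  · simp
  · have hslope : slope f x y ≤ derivWithin f (Ioi x) x :=
      hf.slope_le_rightDeriv (interior_subset hx) hy hxy
        (hf.differentiableWithinAt_Ioi_of_mem_interior hx)
    rw [slope_def_field, div_le_iff₀ (sub_pos.2 hxy)] at hslope
    linarith

end OneVariable

section TwoVariables

variable {A B : Set ℝ} {φ : ℝ × ℝ → ℝ}

lemma comp_swap (hφ : ConcaveOn ℝ (A ×ˢ B) φ) : ConcaveOn ℝ (B ×ˢ A) (φ ∘ Prod.swap) := by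
  have h : ConcaveOn ℝ (Prod.swap ⁻¹' (A ×ˢ B)) (φ ∘ Prod.swap) :=
    hφ.comp_linearMap (LinearEquiv.prodComm ℝ ℝ ℝ).toLinearMap
  rwa [preimage_swap_prod] at h

lemma comp_prodMk_left (hφ : ConcaveOn ℝ (A ×ˢ B) φ) {y : ℝ} (hy : y ∈ B) :
    ConcaveOn ℝ A (fun x => φ (x, y)) := by
  have h := (hφ.translate_right ((0 : ℝ), y)).comp_linearMap (LinearMap.inl ℝ ℝ ℝ)
  have hA : LinearMap.inl ℝ ℝ ℝ ⁻¹' ((fun z => ((0 : ℝ), y) + z) ⁻¹' A ×ˢ B) = A := by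
    ext x; simp [hy]
  have hf : (φ ∘ fun z => ((0 : ℝ), y) + z) ∘ LinearMap.inl ℝ ℝ ℝ = fun x => φ (x, y) := by
    ext x; simp
  rwa [hA, hf] at h

lemma comp_prodMk_right (hφ : ConcaveOn ℝ (A ×ˢ B) φ) {x : ℝ} (hx : x ∈ A) :
    ConcaveOn ℝ B (fun y => φ (x, y)) :=
  hφ.comp_swap.comp_prodMk_left hx

variable {x₀ y₀ x₁ y₁ : ℝ}

lemma le_add_rightDeriv_mul_add_slope_mul (hφ : ConcaveOn ℝ (A ×ˢ B) φ)
    (hx₀ : x₀ ∈ interior A) (hy₀ : y₀ ∈ B) (hx₁ : x₁ ∈ A) (hy₁ : y₁ ∈ B) (hy : y₁ ≤ y₀)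
    {t : ℝ} (ht : t ∈ B) (hyt : y₀ < t) :
    φ (x₁, y₁) ≤ φ (x₀, y₀) + derivWithin (fun x => φ (x, y₀)) (Ioi x₀) x₀ * (x₁ - x₀)
      + slope (fun y => φ (x₀, y)) y₀ t * (y₁ - y₀) := by
  set D := derivWithin (fun x => φ (x, y₀)) (Ioi x₀) x₀
  set S := slope (fun y => φ (x₀, y)) y₀ t
  set c := y₀ - y₁
  set ε := t - y₀
  have hc : 0 ≤ c := sub_nonneg.2 hy
  have hε : 0 < ε := sub_pos.2 hyt
  have hcε : 0 < c + ε := by positivity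
  set θ := c / (c + ε)
  set μ := ε / (c + ε)
  have hθ : θ * (c + ε) = c := div_mul_cancel₀ _ hcε.ne'
  have hμ : μ * (c + ε) = ε := div_mul_cancel₀ _ hcε.ne'
  have hμ₀ : 0 ≤ μ := by positivity
  have hμ₁ : μ ≤ 1 := (div_le_one hcε).2 (by linarith)
  have hsum : θ + μ = 1 := by rw [← add_div, div_self hcε.ne']
  have hmid : θ • (x₀, t) + μ • (x₁, y₁) = (x₀ + μ * (x₁ - x₀), y₀) := by
    ext
    · simp only [Prod.fst_add, Prod.smul_fst, smul_eq_mul]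
      linear_combination x₀ * hsum
    · simp only [Prod.snd_add, Prod.smul_snd, smul_eq_mul]
      exact mul_left_cancel₀ hcε.ne' (by linear_combination t * hθ + y₁ * hμ)
  have hconc := hφ.2 (mk_mem_prod (interior_subset hx₀) ht) (mk_mem_prod hx₁ hy₁)
    (by positivity) hμ₀ hsum
  rw [hmid, smul_eq_mul, smul_eq_mul] at hconc
  have hslice := hφ.comp_prodMk_left hy₀
  have hsuper := hslice.le_add_rightDeriv_mul_sub hx₀
    (hslice.1.add_smul_sub_mem (interior_subset hx₀) hx₁ ⟨hμ₀, hμ₁⟩)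
  have hS : S * ε = φ (x₀, t) - φ (x₀, y₀) := by
    simp only [S, slope_def_field]
    exact div_mul_cancel₀ _ hε.ne'
  rw [smul_eq_mul] at hsuper
  have key := mul_le_mul_of_nonneg_left (hconc.trans hsuper) hcε.le
  have hε_mul : ε * φ (x₁, y₁) ≤ ε * (φ (x₀, y₀) + D * (x₁ - x₀) + S * (y₁ - y₀)) := by
    linear_combination key + (D * (x₁ - x₀) - φ (x₁, y₁)) * hμ - φ (x₀, t) * hθ + c * hS
  exact le_of_mul_le_mul_left hε_mul hε

lemma le_add_rightDeriv_mul_add_rightDeriv_mul_of_snd_le (hφ : ConcaveOn ℝ (A ×ˢ B) φ)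
    (hx₀ : x₀ ∈ interior A) (hy₀ : y₀ ∈ interior B) (hx₁ : x₁ ∈ A) (hy₁ : y₁ ∈ B)
    (hy : y₁ ≤ y₀) :
    φ (x₁, y₁) ≤ φ (x₀, y₀) + derivWithin (fun x => φ (x, y₀)) (Ioi x₀) x₀ * (x₁ - x₀)
      + derivWithin (fun y => φ (x₀, y)) (Ioi y₀) y₀ * (y₁ - y₀) := by
  have hslope : Tendsto (slope (fun y => φ (x₀, y)) y₀) (𝓝[>] y₀)
      (𝓝 (derivWithin (fun y => φ (x₀, y)) (Ioi y₀) y₀)) :=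
    (hasDerivWithinAt_iff_tendsto_slope' self_notMem_Ioi).1
      ((hφ.comp_prodMk_right (interior_subset hx₀)).differentiableWithinAt_Ioi_of_mem_interior
        hy₀).hasDerivWithinAt
  have hbound : ∀ᶠ t in 𝓝[>] y₀, φ (x₁, y₁) ≤ φ (x₀, y₀)
      + derivWithin (fun x => φ (x, y₀)) (Ioi x₀) x₀ * (x₁ - x₀)
      + slope (fun y => φ (x₀, y)) y₀ t * (y₁ - y₀) := by
    filter_upwards [self_mem_nhdsWithin, nhdsWithin_le_nhds (mem_interior_iff_mem_nhds.1 hy₀)]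
      with t hyt ht
    exact hφ.le_add_rightDeriv_mul_add_slope_mul hx₀ (interior_subset hy₀) hx₁ hy₁ hy ht hyt
  exact ge_of_tendsto ((hslope.mul_const _).const_add _) hbound

/-- The restriction on `(x₁, y₁)` is needed: for `φ (x, y) = min x y` at `(0, 0)` both right
partial derivatives vanish, yet `φ (1, 1) = 1`. -/
lemma le_add_rightDeriv_mul_add_rightDeriv_mul (hφ : ConcaveOn ℝ (A ×ˢ B) φ)
    (hx₀ : x₀ ∈ interior A) (hy₀ : y₀ ∈ interior B) (hx₁ : x₁ ∈ A) (hy₁ : y₁ ∈ B)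
    (h : x₁ ≤ x₀ ∨ y₁ ≤ y₀) :
    φ (x₁, y₁) ≤ φ (x₀, y₀) + derivWithin (fun x => φ (x, y₀)) (Ioi x₀) x₀ * (x₁ - x₀)
      + derivWithin (fun y => φ (x₀, y)) (Ioi y₀) y₀ * (y₁ - y₀) := by
  rcases h with hx | hy
  · have := hφ.comp_swap.le_add_rightDeriv_mul_add_rightDeriv_mul_of_snd_le hy₀ hx₀ hy₁ hx₁ hx
    simp only [Function.comp_apply, Prod.swap_prod_mk] at this
    linarith
  · exact hφ.le_add_rightDeriv_mul_add_rightDeriv_mul_of_snd_le hx₀ hy₀ hx₁ hy₁ hy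

end TwoVariables

end ConcaveOn

lemma Lf_div {x y : ℝ} (τ : ℝ) (hx : x ≠ 0) (hy : y ≠ 0) : Lf τ (x / y) = Lf τ x - Lf τ y := by
  rw [Lf, Lf, Lf, Real.log_div hx hy]
  ring

lemma Lf_antitoneOn {τ : ℝ} (hτ : 0 < τ) : AntitoneOn (Lf τ) (Ioi 0) := fun x hx y _ hxy => by
  have := Real.log_le_log hx hxy
  unfold Lf
  nlinarith [div_pos two_pos hτ]

/-- Subreplication property of functionally generated portfolios: for a concave
`φ` on `(0,∞) × ℝ`, the portfolio `u₁ = φ*_sub`, `u₂ = φ(·, L(·))`,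
`Δ^S = -∂₁,ᵣφ`, `Δ^L = -∂₂,ᵣφ` (right partial derivatives) satisfies the
subreplication constraint; `u₁` is the pointwise infimum, valued in
`ℝ ∪ {-∞}` (modelled in `EReal`). -/
theorem functionally_generated_subrep (τ : ℝ) (hτ : 0 < τ)
    (φ : ℝ × ℝ → ℝ) (hφ : ConcaveOn ℝ (Set.Ioi 0 ×ˢ (Set.univ : Set ℝ)) φ) :
    ∀ s₁ s₂ v : ℝ, 0 < s₁ → 0 < s₂ → 0 ≤ v →
      (⨅ w : Set.Ici (0 : ℝ), (((w : ℝ) - φ (s₁, Lf τ s₁ + (w : ℝ) ^ 2) : ℝ) : EReal))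
        + ((φ (s₂, Lf τ s₂)
            + (-(derivWithin (fun t => φ (t, Lf τ s₁ + v ^ 2)) (Set.Ioi s₁) s₁))
                * (s₂ - s₁)
            + (-(derivWithin (fun t => φ (s₁, t)) (Set.Ioi (Lf τ s₁ + v ^ 2))
                  (Lf τ s₁ + v ^ 2)))
                * (Lf τ (s₂ / s₁) - v ^ 2) : ℝ) : EReal)
        ≤ (v : EReal) := by
  intro s₁ s₂ v hs₁ hs₂ hv
  have horder : s₂ ≤ s₁ ∨ Lf τ s₂ ≤ Lf τ s₁ + v ^ 2 := by
    refine (le_total s₂ s₁).imp id fun h => ?_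
    linarith [Lf_antitoneOn hτ hs₁ hs₂ h, sq_nonneg v]
  have hsuper := hφ.le_add_rightDeriv_mul_add_rightDeriv_mul
    (by rwa [interior_Ioi]) (by rw [interior_univ]; trivial) hs₂ (mem_univ _) horder
  have hinf : (⨅ w : Set.Ici (0 : ℝ), (((w : ℝ) - φ (s₁, Lf τ s₁ + (w : ℝ) ^ 2) : ℝ) : EReal))
      ≤ ((v - φ (s₁, Lf τ s₁ + v ^ 2) : ℝ) : EReal) :=
    iInf_le_of_le ⟨v, hv⟩ le_rfl
  refine (add_le_add_left hinf _).trans ?_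
  rw [← EReal.coe_add, EReal.coe_le_coe_iff, Lf_div τ hs₂.ne' hs₁.ne']
  linarith
end
end
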